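/- arXiv:1203.0750 — 2 statements merged into one kernel-verified Lean document; each statement's English description precedes it below -/
import Mathlib

section
/- In ℝᴺ with the Lebesgue measure λ, for fixed a ≺ b in ℝ₊ᴺ \ {0} (componentwise strict order with all coordinates of a positive), there exist positive constants m_{a,b} and M_{a,b} such that for all s, t in the rectangle [a,b]: m_{a,b} · Σᵢ|tᵢ-sᵢ| ≤ λ([0,s] △ [0,t]) ≤ M_{a,b} · maxᵢ|tᵢ-sᵢ|. -/
open MeasureTheory Set

private lemma aux_prod_lower {ι : Type*} (s : Finset ι) (f g m : ι → ℝ)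
    (hm0 : ∀ i, 0 ≤ m i) (hm1 : ∀ i, m i ≤ 1) (hmg : ∀ i, m i ≤ g i)
    (hgf : ∀ i, g i ≤ f i) :
    (∑ i ∈ s, (f i - g i)) * ∏ i ∈ s, m i ≤ ∏ i ∈ s, f i - ∏ i ∈ s, g i := by
  induction' s using Finset.cons_induction_on with a s ha ih
  · simp
  · rw [Finset.prod_cons, Finset.prod_cons, Finset.prod_cons, Finset.sum_cons]
    have hP0 : 0 ≤ ∏ i ∈ s, m i := Finset.prod_nonneg fun i _ => hm0 i
    have hPG : ∏ i ∈ s, m i ≤ ∏ i ∈ s, g i :=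
      Finset.prod_le_prod (fun i _ => hm0 i) (fun i _ => hmg i)
    have hG0 : 0 ≤ ∏ i ∈ s, g i :=
      Finset.prod_nonneg fun i _ => le_trans (hm0 i) (hmg i)
    have hGF : ∏ i ∈ s, g i ≤ ∏ i ∈ s, f i :=
      Finset.prod_le_prod (fun i _ => le_trans (hm0 i) (hmg i)) (fun i _ => hgf i)
    have hS0 : 0 ≤ ∑ i ∈ s, (f i - g i) :=
      Finset.sum_nonneg fun i _ => sub_nonneg.2 (hgf i)
    have hma0 := hm0 a
    have hma1 := hm1 a
    have hmga := hmg a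
    have hgfa := hgf a
    nlinarith [mul_nonneg hS0 hP0, mul_nonneg (sub_nonneg.2 hgfa) hP0,
      mul_nonneg (sub_nonneg.2 hgfa) (sub_nonneg.2 hPG)]

private lemma aux_prod_upper {ι : Type*} (s : Finset ι) (f g M : ι → ℝ)
    (hM1 : ∀ i, 1 ≤ M i) (hfM : ∀ i, f i ≤ M i) (hg0 : ∀ i, 0 ≤ g i)
    (hgf : ∀ i, g i ≤ f i) :
    ∏ i ∈ s, f i - ∏ i ∈ s, g i ≤ (∑ i ∈ s, (f i - g i)) * ∏ i ∈ s, M i := by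
  induction' s using Finset.cons_induction_on with a s ha ih
  · simp
  · rw [Finset.prod_cons, Finset.prod_cons, Finset.prod_cons, Finset.sum_cons]
    have hM0 : 0 ≤ ∏ i ∈ s, M i :=
      Finset.prod_nonneg fun i _ => le_trans zero_le_one (hM1 i)
    have hFM : ∏ i ∈ s, f i ≤ ∏ i ∈ s, M i :=
      Finset.prod_le_prod (fun i _ => le_trans (hg0 i) (hgf i)) (fun i _ => hfM i)
    have hG0 : 0 ≤ ∏ i ∈ s, g i := Finset.prod_nonneg fun i _ => hg0 i
    have hGF : ∏ i ∈ s, g i ≤ ∏ i ∈ s, f i :=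
      Finset.prod_le_prod (fun i _ => hg0 i) (fun i _ => hgf i)
    have hS0 : 0 ≤ ∑ i ∈ s, (f i - g i) :=
      Finset.sum_nonneg fun i _ => sub_nonneg.2 (hgf i)
    have hMa := hM1 a
    have hfMa := hfM a
    have hg0a := hg0 a
    have hgfa := hgf a
    nlinarith [mul_nonneg hS0 hM0, mul_nonneg (sub_nonneg.2 hgfa) hM0,
      mul_nonneg (sub_nonneg.2 hgfa) (sub_nonneg.2 hFM),
      mul_nonneg hS0 (mul_nonneg (sub_nonneg.2 (le_trans hg0a hgfa : (0:ℝ) ≤ f a)) hM0)]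

private lemma vol_symmDiff_eq {N : ℕ} (s t : Fin N → ℝ) (hs : (0:Fin N → ℝ) ≤ s)
    (ht : (0:Fin N → ℝ) ≤ t) :
    (volume (symmDiff (Icc 0 s) (Icc 0 t))).toReal
      = ((∏ i, s i) - ∏ i, min (s i) (t i)) + ((∏ i, t i) - ∏ i, min (s i) (t i)) := by
  have hu : (0:Fin N → ℝ) ≤ fun i => min (s i) (t i) := fun i => le_min (hs i) (ht i)
  have hinter : Icc (0:Fin N → ℝ) s ∩ Icc 0 t = Icc 0 (fun i => min (s i) (t i)) := by
    rw [Icc_inter_Icc, sup_idem]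
    rfl
  have hfin : ∀ v : Fin N → ℝ, volume (Icc (0:Fin N → ℝ) v) ≠ ⊤ := fun v => by
    rw [Real.volume_Icc_pi]
    exact ENNReal.prod_ne_top fun i _ => ENNReal.ofReal_ne_top
  have hdiff1 : volume (Icc (0:Fin N → ℝ) s \ Icc 0 t)
      = volume (Icc (0:Fin N → ℝ) s) - volume (Icc (0:Fin N → ℝ) (fun i => min (s i) (t i))) := by
    rw [← Set.diff_self_inter, hinter]
    exact measure_diff (by rw [← hinter]; exact Set.inter_subset_left)
      measurableSet_Icc.nullMeasurableSet (hfin _)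
  have hdiff2 : volume (Icc (0:Fin N → ℝ) t \ Icc 0 s)
      = volume (Icc (0:Fin N → ℝ) t) - volume (Icc (0:Fin N → ℝ) (fun i => min (s i) (t i))) := by
    rw [← Set.diff_self_inter, Set.inter_comm, hinter]
    exact measure_diff (by rw [← hinter]; exact Set.inter_subset_right)
      measurableSet_Icc.nullMeasurableSet (hfin _)
  have hle1 : volume (Icc (0:Fin N → ℝ) (fun i => min (s i) (t i))) ≤ volume (Icc (0:Fin N → ℝ) s) :=
    measure_mono (Icc_subset_Icc le_rfl (fun i => min_le_left _ _))
  have hle2 : volume (Icc (0:Fin N → ℝ) (fun i => min (s i) (t i))) ≤ volume (Icc (0:Fin N → ℝ) t) :=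
    measure_mono (Icc_subset_Icc le_rfl (fun i => min_le_right _ _))
  rw [measure_symmDiff_eq measurableSet_Icc.nullMeasurableSet measurableSet_Icc.nullMeasurableSet,
    hdiff1, hdiff2,
    ENNReal.toReal_add (by exact (tsub_le_self.trans_lt (hfin s).lt_top).ne)
      (by exact (tsub_le_self.trans_lt (hfin t).lt_top).ne),
    ENNReal.toReal_sub_of_le hle1 (hfin s), ENNReal.toReal_sub_of_le hle2 (hfin t),
    Real.volume_Icc_pi_toReal hs, Real.volume_Icc_pi_toReal ht, Real.volume_Icc_pi_toReal hu]
  simp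

/-- in `ℝᴺ` with Lebesgue measure, for `0 ≺ a ≺ b` there are positive
constants `m_{a,b}`, `M_{a,b}` with
`m_{a,b}·Σᵢ|tᵢ−sᵢ| ≤ λ([0,s] △ [0,t]) ≤ M_{a,b}·maxᵢ|tᵢ−sᵢ|` for all `s,t ∈ [a,b]`. -/
theorem stmt7 {N : ℕ} (a b : Fin N → ℝ) (ha : ∀ i, 0 < a i) (hab : ∀ i, a i < b i) :
    ∃ mab > (0:ℝ), ∃ Mab > (0:ℝ), ∀ s ∈ Icc a b, ∀ t ∈ Icc a b,
      mab * (∑ i, |t i - s i|) ≤ (volume (symmDiff (Icc 0 s) (Icc 0 t))).toReal ∧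
      (volume (symmDiff (Icc 0 s) (Icc 0 t))).toReal ≤ Mab * (⨆ i, |t i - s i|) := by
  refine ⟨∏ i, min (a i) 1, Finset.prod_pos fun i _ => lt_min (ha i) one_pos,
    (N + 1) * ∏ i, max (b i) 1,
    mul_pos (by positivity) (Finset.prod_pos fun i _ => lt_of_lt_of_le one_pos (le_max_right _ _)),
    ?_⟩
  intro s hs t ht
  obtain ⟨has, hsb⟩ := hs
  obtain ⟨hat, htb⟩ := ht
  have hs0 : (0:Fin N → ℝ) ≤ s := fun i => (ha i).le.trans (has i)
  have ht0 : (0:Fin N → ℝ) ≤ t := fun i => (ha i).le.trans (hat i)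
  have key := vol_symmDiff_eq s t hs0 ht0
  set u : Fin N → ℝ := fun i => min (s i) (t i) with hu_def
  have habs : ∀ i, (s i - u i) + (t i - u i) = |t i - s i| := by
    intro i
    rcases le_total (s i) (t i) with h | h
    · rw [abs_of_nonneg (sub_nonneg.2 h)]
      simp [hu_def, min_eq_left h]
    · rw [abs_of_nonpos (sub_nonpos.2 h)]
      simp [hu_def, min_eq_right h]
  have hm0 : ∀ i, (0:ℝ) ≤ min (a i) 1 := fun i => le_min (ha i).le zero_le_one
  have hus : ∀ i, u i ≤ s i := fun i => min_le_left _ _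
  have hut : ∀ i, u i ≤ t i := fun i => min_le_right _ _
  have hmu : ∀ i, min (a i) 1 ≤ u i :=
    fun i => le_min ((min_le_left _ _).trans (has i)) ((min_le_left _ _).trans (hat i))
  have hu0 : ∀ i, (0:ℝ) ≤ u i := fun i => (hm0 i).trans (hmu i)
  have hsum : (∑ i, |t i - s i|) = (∑ i, (s i - u i)) + (∑ i, (t i - u i)) := by
    rw [← Finset.sum_add_distrib]
    exact Finset.sum_congr rfl fun i _ => (habs i).symm
  constructor
  · -- lower bound
    have hlo1 := aux_prod_lower Finset.univ s u (fun i => min (a i) 1)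
      hm0 (fun i => min_le_right _ _) hmu hus
    have hlo2 := aux_prod_lower Finset.univ t u (fun i => min (a i) 1)
      hm0 (fun i => min_le_right _ _) hmu hut
    rw [key, hsum]
    have : (∏ i, min (a i) 1) * ((∑ i, (s i - u i)) + (∑ i, (t i - u i)))
        = (∑ i, (s i - u i)) * ∏ i, min (a i) 1 + (∑ i, (t i - u i)) * ∏ i, min (a i) 1 := by
      ring
    rw [this]
    exact add_le_add hlo1 hlo2
  · -- upper bound
    have hM1 : ∀ i, (1:ℝ) ≤ max (b i) 1 := fun i => le_max_right _ _
    have hup1 := aux_prod_upper Finset.univ s u (fun i => max (b i) 1)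
      hM1 (fun i => (hsb i).trans (le_max_left _ _)) hu0 hus
    have hup2 := aux_prod_upper Finset.univ t u (fun i => max (b i) 1)
      hM1 (fun i => (htb i).trans (le_max_left _ _)) hu0 hut
    have hM0 : (0:ℝ) ≤ ∏ i, max (b i) 1 :=
      Finset.prod_nonneg fun i _ => zero_le_one.trans (hM1 i)
    have hsup0 : (0:ℝ) ≤ ⨆ i, |t i - s i| := Real.iSup_nonneg fun i => abs_nonneg _
    have hSsup : (∑ i, |t i - s i|) ≤ (N + 1) * ⨆ i, |t i - s i| := by
      have h1 : (∑ i, |t i - s i|) ≤ Finset.univ.card • (⨆ i, |t i - s i|) :=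
        Finset.sum_le_card_nsmul Finset.univ _ _
          (fun i _ => le_ciSup (f := fun j => |t j - s j|) (Set.Finite.bddAbove (Set.finite_range _)) i)
      rw [Finset.card_univ, Fintype.card_fin, nsmul_eq_mul] at h1
      nlinarith
    rw [key]
    calc ((∏ i, s i) - ∏ i, u i) + ((∏ i, t i) - ∏ i, u i)
        ≤ (∑ i, (s i - u i)) * (∏ i, max (b i) 1)
          + (∑ i, (t i - u i)) * (∏ i, max (b i) 1) := add_le_add hup1 hup2
      _ = (∑ i, |t i - s i|) * ∏ i, max (b i) 1 := by rw [hsum]; ring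
      _ ≤ ((N + 1) * ⨆ i, |t i - s i|) * ∏ i, max (b i) 1 :=
          mul_le_mul_of_nonneg_right hSsup hM0
      _ = (N + 1) * (∏ i, max (b i) 1) * ⨆ i, |t i - s i| := by ring
end

section
/- Let A = {[0,t] : t ∈ [0,1]ᴺ} with dyadic approximating classes, and let t ∈ (0,1)ᴺ. For each n define t_jⁿ = t_j if 2ⁿt_j ∈ ℕ and t_jⁿ = 2^{-n}⌊2ⁿt_j + 1⌋ otherwise; and t̃_kⁿ = 2^{-n}⌊2ⁿt_k − 1⌋ if 2ⁿt_k ∈ ℕ, t̃_kⁿ = 2^{-n}⌊2ⁿt_k⌋ otherwise. Then the left neighbourhood C_n(t) = ⋂{C ∈ C_n : t ∈ C} equals [0,(t₁ⁿ,…,t_Nⁿ)] \ ⋃_{k=1}^N [0,(t₁ⁿ,…,t̃_kⁿ,…,t_Nⁿ)], and its Lebesgue measure is ∏_{j=1}^N (t_jⁿ − t̃_jⁿ); in particular λ(C_n(t)) = 2^{-Nn} when no coordinate 2ⁿt_j is an integer. -/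
open Set MeasureTheory Classical

/-- The dyadic rectangles `[0, 2^{-n}(l₁,…,l_N)]`, `0 ≤ lᵢ ≤ 2ⁿ`, of `[0,1]ᴺ`. -/
def dyadicRects (N n : ℕ) : Set (Set (Fin N → ℝ)) :=
  {A | ∃ l : Fin N → ℕ, (∀ i, l i ≤ 2 ^ n) ∧ A = Icc 0 (fun i => (l i : ℝ) / 2 ^ n)}

/-- `C_n`: sets of the form `U \ V` with `U ∈ A_n` and `V` a finite union of members
of `A_n`. -/
def dyadicCn (N n : ℕ) : Set (Set (Fin N → ℝ)) :=
  {C | ∃ U ∈ dyadicRects N n, ∃ F : Finset (Set (Fin N → ℝ)),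
    ↑F ⊆ dyadicRects N n ∧ C = U \ ⋃ V ∈ F, V}

/-- `t_jⁿ = t_j` if `2ⁿt_j ∈ ℤ`, and `2^{-n}⌊2ⁿt_j + 1⌋` otherwise. -/
noncomputable def tUp (n : ℕ) (x : ℝ) : ℝ :=
  if ∃ k : ℤ, (2:ℝ) ^ n * x = k then x else (⌊(2:ℝ) ^ n * x + 1⌋ : ℝ) / 2 ^ n

/-- `t̃_kⁿ = 2^{-n}⌊2ⁿt_k − 1⌋` if `2ⁿt_k ∈ ℤ`, and `2^{-n}⌊2ⁿt_k⌋` otherwise. -/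
noncomputable def tDown (n : ℕ) (x : ℝ) : ℝ :=
  if ∃ k : ℤ, (2:ℝ) ^ n * x = k then (⌊(2:ℝ) ^ n * x - 1⌋ : ℝ) / 2 ^ n
  else (⌊(2:ℝ) ^ n * x⌋ : ℝ) / 2 ^ n

lemma dyadic_facts (n : ℕ) {x : ℝ} (hx : x ∈ Set.Ioo (0:ℝ) 1) :
    (∃ a : ℕ, a ≤ 2 ^ n ∧ tUp n x = (a : ℝ) / 2 ^ n) ∧
    (∃ b : ℕ, b ≤ 2 ^ n ∧ tDown n x = (b : ℝ) / 2 ^ n) ∧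
    tUp n x - tDown n x = 1 / 2 ^ n ∧
    tDown n x < x ∧ x ≤ tUp n x ∧ 0 ≤ tDown n x ∧
    (∀ l : ℕ, x ≤ (l:ℝ) / 2 ^ n → tUp n x ≤ (l:ℝ) / 2 ^ n) ∧
    (∀ l : ℕ, (l:ℝ) / 2 ^ n < x → (l:ℝ) / 2 ^ n ≤ tDown n x) := by
  obtain ⟨hx0, hx1⟩ := hx
  have h2 : (0:ℝ) < 2 ^ n := by positivity
  have hy0 : 0 < (2:ℝ) ^ n * x := by positivity
  have hy1 : (2:ℝ) ^ n * x < 2 ^ n := by nlinarith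
  by_cases h : ∃ k : ℤ, (2:ℝ) ^ n * x = k
  · obtain ⟨k, hk⟩ := h
    have hk1 : 1 ≤ k := by
      have : (0:ℝ) < (k:ℝ) := hk ▸ hy0
      exact_mod_cast this
    have hk1' : (1:ℝ) ≤ (k:ℝ) := by exact_mod_cast hk1
    have hk2' : k < ((2 ^ n : ℕ) : ℤ) := by
      have : (k:ℝ) < ((2 ^ n : ℕ) : ℝ) := by push_cast; exact hk ▸ hy1
      exact_mod_cast this
    have hxk : x = (k:ℝ) / 2 ^ n := by
      field_simp
      linarith [hk]
    have hup : tUp n x = x := by rw [tUp, if_pos ⟨k, hk⟩]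
    have hfl : ⌊(2:ℝ) ^ n * x - 1⌋ = k - 1 := by
      rw [hk, show ((k:ℝ) - 1) = ((k - 1 : ℤ) : ℝ) by push_cast; ring, Int.floor_intCast]
    have hdown : tDown n x = ((k:ℝ) - 1) / 2 ^ n := by
      rw [tDown, if_pos ⟨k, hk⟩, hfl]; push_cast; ring
    have hc1 : ((k.toNat : ℕ) : ℝ) = (k:ℝ) := by
      exact_mod_cast congrArg (fun z : ℤ => (z:ℝ)) (Int.toNat_of_nonneg (by omega : (0:ℤ) ≤ k))
    have hc2 : (((k-1).toNat : ℕ) : ℝ) = (k:ℝ) - 1 := by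
      exact_mod_cast congrArg (fun z : ℤ => (z:ℝ)) (Int.toNat_of_nonneg (by omega : (0:ℤ) ≤ k - 1))
    refine ⟨⟨k.toNat, by omega, ?_⟩, ⟨(k-1).toNat, by omega, ?_⟩, ?_, ?_, ?_, ?_, ?_, ?_⟩
    · rw [hup, hxk, hc1]
    · rw [hdown, hc2]
    · rw [hup, hdown, hxk]; ring
    · rw [hdown, hxk]
      gcongr
      linarith
    · rw [hup]
    · rw [hdown]
      apply div_nonneg (by linarith) h2.le
    · intro l hl; rw [hup]; exact hl
    · intro l hl
      rw [hdown]
      have hly : (l:ℝ) < (k:ℝ) := by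
        rw [hxk] at hl
        have := (div_lt_div_iff_of_pos_right h2).mp hl
        exact this
      have : (l:ℝ) ≤ (k:ℝ) - 1 := by
        have h' : (l:ℤ) < k := by exact_mod_cast hly
        have : (l:ℤ) ≤ k - 1 := by omega
        exact_mod_cast this
      exact div_le_div_of_nonneg_right this h2.le |>.trans_eq rfl
  · have hm0 : 0 ≤ ⌊(2:ℝ) ^ n * x⌋ := Int.floor_nonneg.mpr hy0.le
    have hmlt : (⌊(2:ℝ) ^ n * x⌋ : ℝ) < 2 ^ n * x :=
      lt_of_le_of_ne (Int.floor_le _) (fun he => h ⟨_, he.symm⟩)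
    have hyle : (2:ℝ) ^ n * x ≤ (⌊(2:ℝ) ^ n * x⌋ : ℝ) + 1 := (Int.lt_floor_add_one _).le
    have hm2 : ⌊(2:ℝ) ^ n * x⌋ + 1 ≤ ((2 ^ n : ℕ) : ℤ) := by
      have h1 : (⌊(2:ℝ) ^ n * x⌋:ℝ) < ((2 ^ n : ℕ):ℝ) := by push_cast; linarith
      have : ⌊(2:ℝ) ^ n * x⌋ < ((2 ^ n : ℕ):ℤ) := by exact_mod_cast h1
      omega
    have hfl1 : ⌊(2:ℝ) ^ n * x + 1⌋ = ⌊(2:ℝ) ^ n * x⌋ + 1 := by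
      rw [show (2:ℝ) ^ n * x + 1 = 2 ^ n * x + (1:ℤ) by push_cast; ring, Int.floor_add_intCast]
    have hup : tUp n x = ((⌊(2:ℝ) ^ n * x⌋:ℝ) + 1) / 2 ^ n := by
      rw [tUp, if_neg h, hfl1]; push_cast; ring
    have hdown : tDown n x = (⌊(2:ℝ) ^ n * x⌋:ℝ) / 2 ^ n := by
      rw [tDown, if_neg h]
    have hc1 : (((⌊(2:ℝ) ^ n * x⌋ + 1).toNat : ℕ) : ℝ) = (⌊(2:ℝ) ^ n * x⌋:ℝ) + 1 := by
      exact_mod_cast congrArg (fun z : ℤ => (z:ℝ))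
        (Int.toNat_of_nonneg (by omega : (0:ℤ) ≤ ⌊(2:ℝ) ^ n * x⌋ + 1))
    have hc2 : ((⌊(2:ℝ) ^ n * x⌋.toNat : ℕ) : ℝ) = (⌊(2:ℝ) ^ n * x⌋:ℝ) := by
      exact_mod_cast congrArg (fun z : ℤ => (z:ℝ)) (Int.toNat_of_nonneg hm0)
    refine ⟨⟨(⌊(2:ℝ) ^ n * x⌋ + 1).toNat, by omega, ?_⟩,
        ⟨⌊(2:ℝ) ^ n * x⌋.toNat, by omega, ?_⟩, ?_, ?_, ?_, ?_, ?_, ?_⟩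
    · rw [hup, hc1]
    · rw [hdown, hc2]
    · rw [hup, hdown]; ring
    · rw [hdown, div_lt_iff₀ h2]; linarith
    · rw [hup, le_div_iff₀ h2]; linarith
    · rw [hdown]; positivity
    · intro l hl
      rw [hup]
      have hyl : (2:ℝ) ^ n * x ≤ l := by
        rw [le_div_iff₀ h2] at hl; linarith
      have hyl' : (2:ℝ) ^ n * x < l := lt_of_le_of_ne hyl (fun he => h ⟨l, by exact_mod_cast he⟩)
      have h1 : (⌊(2:ℝ) ^ n * x⌋:ℝ) < (l:ℝ) := by linarith
      have : ⌊(2:ℝ) ^ n * x⌋ + 1 ≤ (l:ℤ) := by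
        have : ⌊(2:ℝ) ^ n * x⌋ < (l:ℤ) := by exact_mod_cast h1
        omega
      have : (⌊(2:ℝ) ^ n * x⌋:ℝ) + 1 ≤ (l:ℝ) := by exact_mod_cast this
      exact div_le_div_of_nonneg_right this h2.le
    · intro l hl
      rw [hdown]
      have hly : (l:ℝ) < (2:ℝ) ^ n * x := by
        rw [div_lt_iff₀ h2] at hl; linarith
      have : (l:ℤ) ≤ ⌊(2:ℝ) ^ n * x⌋ := Int.le_floor.mpr (by exact_mod_cast hly.le)
      have : (l:ℝ) ≤ (⌊(2:ℝ) ^ n * x⌋:ℝ) := by exact_mod_cast this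
      exact div_le_div_of_nonneg_right this h2.le

/-- The set-difference equals a product of half-open intervals. -/
lemma diff_eq_pi {N : ℕ} (u d : Fin N → ℝ) (hd0 : ∀ j, 0 ≤ d j) :
    Icc 0 u \ (⋃ k, Icc 0 (Function.update u k (d k)))
      = Set.univ.pi fun j => Ioc (d j) (u j) := by
  ext x
  simp only [mem_diff, mem_Icc, mem_iUnion, not_exists, mem_univ_pi, mem_Ioc,
    Pi.le_def, Pi.zero_apply]
  constructor
  · rintro ⟨⟨hx0, hxu⟩, hnot⟩ j
    refine ⟨?_, hxu j⟩
    by_contra hle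
    push_neg at hle
    refine hnot j ⟨hx0, fun i => ?_⟩
    rcases eq_or_ne i j with rfl | hij
    · simpa using hle
    · simpa [Function.update_apply, hij] using hxu i
  · intro hx
    refine ⟨⟨fun i => (hd0 i).trans (hx i).1.le, fun i => (hx i).2⟩, fun k hk => ?_⟩
    have := hk.2 k
    rw [Function.update_self] at this
    exact absurd this (not_le.mpr (hx k).1)

/-- the left neighbourhood `C_n(t) = ⋂{C ∈ C_n : t ∈ C}` equals
`[0,(t₁ⁿ,…,t_Nⁿ)] \ ⋃_k [0,(t₁ⁿ,…,t̃_kⁿ,…,t_Nⁿ)]`, its Lebesgue measure is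
`∏_j (t_jⁿ − t̃_jⁿ)`, and equals `2^{-Nn}` when no `2ⁿt_j` is an integer. -/
theorem stmt16 {N : ℕ} (n : ℕ) (t : Fin N → ℝ) (ht : ∀ j, t j ∈ Ioo (0:ℝ) 1) :
    (⋂₀ {C | C ∈ dyadicCn N n ∧ t ∈ C}
        = Icc 0 (fun j => tUp n (t j)) \
            ⋃ k : Fin N, Icc 0 (Function.update (fun j => tUp n (t j)) k (tDown n (t k)))) ∧
    volume (Icc 0 (fun j => tUp n (t j)) \
            ⋃ k : Fin N, Icc 0 (Function.update (fun j => tUp n (t j)) k (tDown n (t k))))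
      = ENNReal.ofReal (∏ j, (tUp n (t j) - tDown n (t j))) ∧
    ((∀ j, ¬ ∃ k : ℤ, (2:ℝ) ^ n * t j = k) →
      volume (Icc 0 (fun j => tUp n (t j)) \
            ⋃ k : Fin N, Icc 0 (Function.update (fun j => tUp n (t j)) k (tDown n (t k))))
        = ENNReal.ofReal (1 / 2 ^ (N * n))) := by

  classical
  have H := fun j => dyadic_facts n (ht j)
  choose a ha hua using fun j => (H j).1
  choose b hb hdb using fun j => (H j).2.1
  have hdiff : ∀ j, tUp n (t j) - tDown n (t j) = 1 / 2 ^ n := fun j => (H j).2.2.1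
  have hdlt : ∀ j, tDown n (t j) < t j := fun j => (H j).2.2.2.1
  have htu : ∀ j, t j ≤ tUp n (t j) := fun j => (H j).2.2.2.2.1
  have hd0 : ∀ j, 0 ≤ tDown n (t j) := fun j => (H j).2.2.2.2.2.1
  have hupmin : ∀ j, ∀ l : ℕ, t j ≤ (l:ℝ) / 2 ^ n → tUp n (t j) ≤ (l:ℝ) / 2 ^ n :=
    fun j => (H j).2.2.2.2.2.2.1
  have hdmax : ∀ j, ∀ l : ℕ, (l:ℝ) / 2 ^ n < t j → (l:ℝ) / 2 ^ n ≤ tDown n (t j) :=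
    fun j => (H j).2.2.2.2.2.2.2
  have hC0 : Icc 0 (fun j => tUp n (t j)) \
      (⋃ k : Fin N, Icc 0 (Function.update (fun j => tUp n (t j)) k (tDown n (t k))))
      = Set.univ.pi fun j => Ioc (tDown n (t j)) (tUp n (t j)) :=
    diff_eq_pi (fun j => tUp n (t j)) (fun j => tDown n (t j)) hd0
  -- C₀ belongs to the family and contains t
  have hC0mem : (Icc 0 (fun j => tUp n (t j)) \
      ⋃ k : Fin N, Icc 0 (Function.update (fun j => tUp n (t j)) k (tDown n (t k))))
      ∈ dyadicCn N n := by
    refine ⟨Icc 0 (fun j => tUp n (t j)), ⟨a, ha, by simp only [hua]⟩,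
      Finset.image
        (fun k : Fin N => Icc 0 (Function.update (fun j => tUp n (t j)) k (tDown n (t k))))
        Finset.univ, ?_, ?_⟩
    · intro V hV
      simp only [Finset.coe_image, Finset.coe_univ, Set.image_univ, mem_range] at hV
      obtain ⟨k, rfl⟩ := hV
      have hfun : Function.update (fun j => tUp n (t j)) k (tDown n (t k))
          = fun i => (((fun i => if i = k then b k else a i) i : ℕ) : ℝ) / 2 ^ n := by
        funext i
        rcases eq_or_ne i k with rfl | hik
        · simp [Function.update_self, hdb]
        · simp [Function.update_apply, hik, hua]
      exact ⟨fun i => if i = k then b k else a i,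
        fun i => by by_cases h : i = k <;> simp [h, hb k, ha i], by rw [hfun]⟩
    · congr 1
      ext x
      simp only [mem_iUnion, Finset.mem_image, Finset.mem_univ, true_and, exists_exists_eq_and]
      constructor
      · rintro ⟨i, hi⟩; exact ⟨_, ⟨i, rfl⟩, hi⟩
      · rintro ⟨_, ⟨i, rfl⟩, hi⟩; exact ⟨i, hi⟩
  have htC0 : t ∈ Icc 0 (fun j => tUp n (t j)) \
      ⋃ k : Fin N, Icc 0 (Function.update (fun j => tUp n (t j)) k (tDown n (t k))) := by
    rw [hC0]
    exact fun j _ => ⟨hdlt j, htu j⟩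
  -- every member of the family contains the pi set
  have hsub : ∀ C, C ∈ dyadicCn N n → t ∈ C →
      (Set.univ.pi fun j => Ioc (tDown n (t j)) (tUp n (t j))) ⊆ C := by
    rintro C ⟨U, ⟨l, hl, rfl⟩, F, hF, rfl⟩ htC x hx
    obtain ⟨htU, htV⟩ := htC
    have hx' : ∀ i, x i ∈ Ioc (tDown n (t i)) (tUp n (t i)) := fun i => hx i (mem_univ i)
    constructor
    · refine ⟨fun i => ((hd0 i).trans (hx' i).1.le : (0:ℝ) ≤ x i), fun i => ?_⟩
      have hti : t i ≤ (l i : ℝ) / 2 ^ n := htU.2 i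
      exact (hx' i).2.trans (hupmin i (l i) hti)
    · intro hxV
      simp only [mem_iUnion] at hxV
      obtain ⟨V, hVF, hxV⟩ := hxV
      obtain ⟨m, hm, rfl⟩ := hF hVF
      have htV' : t ∉ Icc (0 : Fin N → ℝ) (fun i => (m i : ℝ) / 2 ^ n) := by
        intro hmem
        exact htV (mem_iUnion.mpr ⟨_, mem_iUnion.mpr ⟨hVF, hmem⟩⟩)
      have : ∃ k, ¬ t k ≤ (m k : ℝ) / 2 ^ n := by
        by_contra hc
        push_neg at hc
        exact htV' ⟨fun i => (ht i).1.le, hc⟩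
      obtain ⟨k, hk⟩ := this
      push_neg at hk
      have : (m k : ℝ) / 2 ^ n ≤ tDown n (t k) := hdmax k (m k) hk
      exact absurd (hxV.2 k) (not_le.mpr (lt_of_le_of_lt this (hx' k).1))
  refine ⟨?_, ?_, ?_⟩
  · apply subset_antisymm
    · exact sInter_subset_of_mem ⟨hC0mem, htC0⟩
    · rw [hC0]
      intro x hx C hC
      exact hsub C hC.1 hC.2 hx
  · rw [hC0, volume_pi_pi]
    simp only [Real.volume_Ioc]
    rw [← ENNReal.ofReal_prod_of_nonneg]
    intro j _
    rw [hdiff j]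
    positivity
  · intro _
    rw [hC0, volume_pi_pi]
    simp only [Real.volume_Ioc, hdiff]
    rw [Finset.prod_const]
    rw [← ENNReal.ofReal_pow (by positivity)]
    congr 1
    rw [Finset.card_univ, Fintype.card_fin]
    rw [div_pow, one_pow, ← pow_mul, mul_comm]
end
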